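/- Suppose L takes values in {0,1} with b(l|a,w)=P(L=l|A=a,W=w) and d(l|z,a,w)=P(L=l|Z=z,A=a,W=w) positive, and let g(a|w), e(a|z,w) be the positive conditional densities of A given W=w and given (Z,W)=(z,w). Then, almost everywhere, the density-ratio weights of the efficient influence functions admit the representations H^1_δ(a,z,l,w) := (g_δ(a|w)/g(a|w)) · (p(z|a,w)/p(z|l,a,w)) = (g_δ(a|w)/g(a|w)) · (b(l|a,w)/d(l|z,a,w)) and H^2_δ(a,z,l,w) := (g_δ(a|w)/g(a|w)) · (p(z|w)/p(z|l,a,w)) = (g_δ(a|w)/e(a|z,w)) · (b(l|a,w)/d(l|z,a,w)). -/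

import Mathlib

theorem eif_weight_representations_general
    {𝕎 𝔸 ℤ' : Type*}
    -- the stochastic intervention density `g_δ(a|w)`
    (gδ : 𝔸 → 𝕎 → ℝ)
    -- conditional densities of `A`: `g(a|w)` and `e(a|z,w)`, assumed positive
    (g : 𝔸 → 𝕎 → ℝ) (e : 𝔸 → ℤ' → 𝕎 → ℝ)
    -- conditional densities of `Z`: `p(z|w)`, `p(z|a,w)`, `p(z|l,a,w)`
    (pzw : ℤ' → 𝕎 → ℝ) (pzaw : ℤ' → 𝔸 → 𝕎 → ℝ) (pzlaw : ℤ' → ℝ → 𝔸 → 𝕎 → ℝ)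
    -- conditional probabilities of the binary `L`: `b(l|a,w)` and `d(l|z,a,w)`
    (b : ℝ → 𝔸 → 𝕎 → ℝ) (dL : ℝ → ℤ' → 𝔸 → 𝕎 → ℝ)
    (hg_pos : ∀ a w, 0 < g a w) (he_pos : ∀ a z w, 0 < e a z w)
    (hpzlaw_pos : ∀ z l a w, (l = 0 ∨ l = 1) → 0 < pzlaw z l a w)
    (hd_pos : ∀ l z a w, (l = 0 ∨ l = 1) → 0 < dL l z a w)
    -- Bayes' rule: `p(z|a,w) d(l|z,a,w) = p(z|l,a,w) b(l|a,w)` (both sides are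
    -- versions of `p(z,l|a,w)`) and `p(z|w) e(a|z,w) = p(z|a,w) g(a|w)`
    (hBayesL : ∀ z l a w, (l = 0 ∨ l = 1) →
      pzaw z a w * dL l z a w = pzlaw z l a w * b l a w)
    (hBayesA : ∀ z a w, pzw z w * e a z w = pzaw z a w * g a w) :
    ∀ (a : 𝔸) (z : ℤ') (l : ℝ) (w : 𝕎), (l = 0 ∨ l = 1) →
      (gδ a w / g a w * (pzaw z a w / pzlaw z l a w)
          = gδ a w / g a w * (b l a w / dL l z a w)) ∧
      (gδ a w / g a w * (pzw z w / pzlaw z l a w)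
          = gδ a w / e a z w * (b l a w / dL l z a w)) := by
  intro a z l w hl
  have ratio_L : pzaw z a w / pzlaw z l a w = b l a w / dL l z a w :=
    (div_eq_div_iff (hpzlaw_pos z l a w hl).ne' (hd_pos l z a w hl).ne').2
      (by rw [hBayesL z l a w hl, mul_comm])
  have ratio_A : pzw z w / g a w = pzaw z a w / e a z w :=
    (div_eq_div_iff (hg_pos a w).ne' (he_pos a z w).ne').2 (hBayesA z a w)
  refine ⟨by rw [ratio_L], ?_⟩
  calc gδ a w / g a w * (pzw z w / pzlaw z l a w)
      = gδ a w * (pzw z w / g a w) / pzlaw z l a w := by ring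
    _ = gδ a w * (pzaw z a w / e a z w) / pzlaw z l a w := by rw [ratio_A]
    _ = gδ a w / e a z w * (pzaw z a w / pzlaw z l a w) := by ring
    _ = gδ a w / e a z w * (b l a w / dL l z a w) := by rw [ratio_L]

/-- Suppose `L` takes values in `{0,1}` with
`b(l|a,w) = P(L=l|A=a,W=w)` and `d(l|z,a,w) = P(L=l|Z=z,A=a,W=w)` positive, and let
`g(a|w)`, `e(a|z,w)` be the positive conditional densities of `A` given `W=w` and given
`(Z,W)=(z,w)`.  Then the density-ratio weights of the efficient influence functions
admit the representations
`H¹_δ(a,z,l,w) := (g_δ(a|w)/g(a|w)) (p(z|a,w)/p(z|l,a,w))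
               = (g_δ(a|w)/g(a|w)) (b(l|a,w)/d(l|z,a,w))` and
`H²_δ(a,z,l,w) := (g_δ(a|w)/g(a|w)) (p(z|w)/p(z|l,a,w))
               = (g_δ(a|w)/e(a|z,w)) (b(l|a,w)/d(l|z,a,w))`. -/
theorem eif_weight_representations
    {𝕎 𝔸 ℤ' : Type*}
    -- the stochastic intervention density `g_δ(a|w)`
    (gδ : 𝔸 → 𝕎 → ℝ)
    -- conditional densities of `A`: `g(a|w)` and `e(a|z,w)`, assumed positive
    (g : 𝔸 → 𝕎 → ℝ) (e : 𝔸 → ℤ' → 𝕎 → ℝ)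
    -- conditional densities of `Z`: `p(z|w)`, `p(z|a,w)`, `p(z|l,a,w)`
    (pzw : ℤ' → 𝕎 → ℝ) (pzaw : ℤ' → 𝔸 → 𝕎 → ℝ) (pzlaw : ℤ' → ℝ → 𝔸 → 𝕎 → ℝ)
    -- conditional probabilities of the binary `L`: `b(l|a,w)` and `d(l|z,a,w)`
    (b : ℝ → 𝔸 → 𝕎 → ℝ) (dL : ℝ → ℤ' → 𝔸 → 𝕎 → ℝ)
    (hg_pos : ∀ a w, 0 < g a w) (he_pos : ∀ a z w, 0 < e a z w)
    (hpzlaw_pos : ∀ z l a w, (l = 0 ∨ l = 1) → 0 < pzlaw z l a w)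
    (hb_pos : ∀ l a w, (l = 0 ∨ l = 1) → 0 < b l a w)
    (hd_pos : ∀ l z a w, (l = 0 ∨ l = 1) → 0 < dL l z a w)
    -- Bayes' rule: `p(z|a,w) d(l|z,a,w) = p(z|l,a,w) b(l|a,w)` (both sides are
    -- versions of `p(z,l|a,w)`) and `p(z|w) e(a|z,w) = p(z|a,w) g(a|w)`
    (hBayesL : ∀ z l a w, (l = 0 ∨ l = 1) →
      pzaw z a w * dL l z a w = pzlaw z l a w * b l a w)
    (hBayesA : ∀ z a w, pzw z w * e a z w = pzaw z a w * g a w) :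
    ∀ (a : 𝔸) (z : ℤ') (l : ℝ) (w : 𝕎), (l = 0 ∨ l = 1) →
      (gδ a w / g a w * (pzaw z a w / pzlaw z l a w)
          = gδ a w / g a w * (b l a w / dL l z a w)) ∧
      (gδ a w / g a w * (pzw z w / pzlaw z l a w)
          = gδ a w / e a z w * (b l a w / dL l z a w)) :=
  eif_weight_representations_general gδ g e pzw pzaw pzlaw b dL hg_pos he_pos hpzlaw_pos hd_pos
    hBayesL hBayesA
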